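/- arXiv:1907.00188 — 7 statements merged into one kernel-verified Lean document; each statement's English description precedes it below -/
import Mathlib

section
/- For all real x, B(ax) + B(bx) + B((a+b)x) ≥ 1/24 for any positive integers a, b, where B(x) = min_{k∈ℤ} (1/2)(x - 1/2 + k)². -/
/-!
Write the three arguments of `B` as `s + 1/2`, `t + 1/2` and `s + t + n + 1/2` modulo `ℤ`, where
`n` is a half-integer, so `n ^ 2 ≥ 1/4`. The quadratic form `s² + t² + (s + t + n)²` is minimal at
`s = t = -n/3`, with value `n² / 3 ≥ 1/12`.
-/

/-- `B x = min_{k ∈ ℤ} (1/2)(x - 1/2 + k)²`. -/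
noncomputable def B (x : ℝ) : ℝ := ⨅ k : ℤ, (1/2 : ℝ) * (x - 1/2 + (k : ℝ))^2

lemma sq_div_three_le_sq_add_sq_add_sq_add (s t n : ℝ) :
    n ^ 2 / 3 ≤ s ^ 2 + t ^ 2 + (s + t + n) ^ 2 := by
  nlinarith [sq_nonneg (s - t), sq_nonneg (3 * (s + t) + 2 * n)]

lemma one_div_four_le_sq_intCast_add_half (m : ℤ) : 1 / 4 ≤ ((m : ℝ) + 1 / 2) ^ 2 := by
  have hm : (0 : ℝ) ≤ m * (m + 1) := by
    rcases le_or_gt 0 m with h | h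
    · positivity
    · have h' : (m : ℝ) + 1 ≤ 0 := by exact_mod_cast h
      nlinarith
  nlinarith

lemma one_div_twentyFour_le_B_add_B_add_B (u v : ℝ) : 1 / 24 ≤ B u + B v + B (u + v) := by
  unfold B
  rw [← sub_le_iff_le_add]
  refine le_ciInf_add_ciInf fun k₁ k₂ => sub_le_iff_le_add.mpr <| le_add_ciInf fun k₃ => ?_
  set s := u - 1 / 2 + k₁
  set t := v - 1 / 2 + k₂
  have hsum : u + v - 1 / 2 + k₃ = s + t + ((k₃ - k₁ - k₂ : ℤ) + 1 / 2 : ℝ) := by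
    push_cast; ring
  have hform := sq_div_three_le_sq_add_sq_add_sq_add s t ((k₃ - k₁ - k₂ : ℤ) + 1 / 2)
  have hhalf := one_div_four_le_sq_intCast_add_half (k₃ - k₁ - k₂)
  rw [hsum]
  linarith

theorem theta_quark_order_general (a b : ℕ) (x : ℝ) :
    B ((a : ℝ) * x) + B ((b : ℝ) * x) + B (((a : ℝ) + (b : ℝ)) * x) ≥ 1 / 24 := by
  rw [add_mul]
  exact one_div_twentyFour_le_B_add_B_add_B _ _

/-- For positive integers `a, b` and any real `x`,
`B(ax) + B(bx) + B((a+b)x) ≥ 1/24`. -/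
theorem theta_quark_order (a b : ℕ) (ha : 0 < a) (hb : 0 < b) (x : ℝ) :
    B ((a : ℝ) * x) + B ((b : ℝ) * x) + B (((a : ℝ) + (b : ℝ)) * x) ≥ 1 / 24 :=
  theta_quark_order_general a b x
end

section
/- The minimum over (x,y,z) ∈ ℝ³ with x + y + z = 0 of B(x) + B(y) + B(z) equals 1/24, where B(x) = min_{k∈ℤ} (1/2)(x - 1/2 + k)²; the minimum is attained when the fractional parts of x, y, z all equal 1/3 or all equal 2/3. -/
lemma sq_sub_half_le_sq_sub_half_add_int {f : ℝ} (h0 : 0 ≤ f) (h1 : f < 1) (m : ℤ) :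
    (f - 1/2) ^ 2 ≤ (f - 1/2 + m) ^ 2 := by
  rcases lt_trichotomy m 0 with hm | rfl | hm
  · have : (m : ℝ) ≤ -1 := by exact_mod_cast Int.le_sub_one_of_lt hm
    nlinarith
  · simp
  · have : (1 : ℝ) ≤ m := by exact_mod_cast hm
    nlinarith

lemma B_eq_half_sq_fract_sub_half (x : ℝ) : B x = (Int.fract x - 1/2) ^ 2 / 2 := by
  have hshift (k : ℤ) : x - 1/2 + k = Int.fract x - 1/2 + ((k + ⌊x⌋ : ℤ) : ℝ) := by
    rw [← Int.self_sub_floor]; push_cast; ring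
  refine IsGLB.ciInf_eq (IsLeast.isGLB ⟨⟨-⌊x⌋, ?_⟩, ?_⟩)
  · dsimp only
    rw [hshift, neg_add_cancel, Int.cast_zero, add_zero]; ring
  · rintro _ ⟨k, rfl⟩
    have := sq_sub_half_le_sq_sub_half_add_int (Int.fract_nonneg x) (Int.fract_lt_one x) (k + ⌊x⌋)
    dsimp only
    rw [hshift]; linarith

lemma exists_int_fract_add_fract_add_fract {x y z : ℝ} (h : x + y + z = 0) :
    ∃ n : ℤ, Int.fract x + Int.fract y + Int.fract z = n :=
  ⟨-(⌊x⌋ + ⌊y⌋ + ⌊z⌋), by simp only [Int.fract]; push_cast; linarith⟩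

lemma one_quarter_le_sq_int_sub_three_halves (n : ℤ) : 1/4 ≤ ((n : ℝ) - 3/2) ^ 2 := by
  have hodd : 1 ≤ (2 * n - 3) ^ 2 := by
    have : 2 * n - 3 ≠ 0 := by omega
    nlinarith [Int.one_le_abs this, sq_abs (2 * n - 3)]
  have : (1 : ℝ) ≤ (2 * n - 3) ^ 2 := by exact_mod_cast hodd
  nlinarith

lemma one_twelfth_le_sum_sq_sub_half {a b c : ℝ} {n : ℤ} (h : a + b + c = n) :
    1/12 ≤ (a - 1/2) ^ 2 + (b - 1/2) ^ 2 + (c - 1/2) ^ 2 := by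
  have hqm : (a + b + c - 3/2) ^ 2 ≤ 3 * ((a - 1/2) ^ 2 + (b - 1/2) ^ 2 + (c - 1/2) ^ 2) := by
    nlinarith [sq_nonneg (a - b), sq_nonneg (b - c), sq_nonneg (a - c)]
  have := one_quarter_le_sq_int_sub_three_halves n
  rw [h] at hqm
  linarith

lemma B_add_B_add_B_of_fract_eq {x y z : ℝ}
    (h : (Int.fract x = 1/3 ∧ Int.fract y = 1/3 ∧ Int.fract z = 1/3) ∨
      (Int.fract x = 2/3 ∧ Int.fract y = 2/3 ∧ Int.fract z = 2/3)) :
    B x + B y + B z = 1/24 := by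
  rcases h with ⟨hx, hy, hz⟩ | ⟨hx, hy, hz⟩ <;>
    · rw [B_eq_half_sq_fract_sub_half, B_eq_half_sq_fract_sub_half, B_eq_half_sq_fract_sub_half,
        hx, hy, hz]
      norm_num

/-- The minimum of `B x + B y + B z` over the plane `x + y + z = 0` equals `1/24`,
attained when the fractional parts of `x, y, z` are all `1/3` or all `2/3`. -/
theorem min_sum_B_on_plane :
    IsLeast {s : ℝ | ∃ x y z : ℝ, x + y + z = 0 ∧ s = B x + B y + B z} (1/24) ∧
    ∀ x y z : ℝ, x + y + z = 0 →
      ((Int.fract x = 1/3 ∧ Int.fract y = 1/3 ∧ Int.fract z = 1/3) ∨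
       (Int.fract x = 2/3 ∧ Int.fract y = 2/3 ∧ Int.fract z = 2/3)) →
      B x + B y + B z = 1/24 := by
  have hfract_third : Int.fract (1/3 : ℝ) = 1/3 := Int.fract_eq_self.mpr (by norm_num)
  have hfract_neg_two_thirds : Int.fract (-2/3 : ℝ) = 1/3 := by
    rw [Int.fract_eq_iff]; exact ⟨by norm_num, by norm_num, -1, by norm_num⟩
  refine ⟨⟨⟨1/3, 1/3, -2/3, by norm_num, ?_⟩, ?_⟩, fun x y z _ ↦ B_add_B_add_B_of_fract_eq⟩
  · exact (B_add_B_add_B_of_fract_eq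
      (Or.inl ⟨hfract_third, hfract_third, hfract_neg_two_thirds⟩)).symm
  · rintro s ⟨x, y, z, hsum, rfl⟩
    obtain ⟨n, hn⟩ := exists_int_fract_add_fract_add_fract hsum
    have := one_twelfth_le_sum_sq_sub_half hn
    simp only [B_eq_half_sq_fract_sub_half]
    linarith
end

section
/- For a = (a₁,…,a_N) ∈ ℤ^N, the quantity 24·min_{x∈ℝ} ∑_j B(aⱼ x) equals 3·min over n ∈ ℤ^N with all entries odd of S_a(n)/‖a‖², where S_a(n) = ‖n‖²·‖a‖² − (n·a)² and B(x) = min_{k∈ℤ} (1/2)(x - 1/2 + k)². -/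
open scoped BigOperators

/-- `S_a(n) = ‖n‖²‖a‖² − (n·a)²`. -/
def Svec {N : ℕ} (a n : Fin N → ℤ) : ℤ :=
  (∑ j, (n j)^2) * (∑ j, (a j)^2) - (∑ j, n j * a j)^2

/-!
Since `(1/2)(y - 1/2 + k)² = (2y - (1 - 2k))²/8`, we have `8 B(y) = min_{n odd} (2y - n)²`, so
`8 ∑ⱼ B(aⱼx)` is the minimum over odd `n` of `∑ⱼ (2aⱼx - nⱼ)²`. For fixed `n` this is a quadratic
in `x` whose minimum is `S_a(n)/‖a‖²` (Lagrange's identity), and exchanging the two minima gives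
the theorem.
-/

lemma B_nonneg (y : ℝ) : 0 ≤ B y :=
  le_ciInf fun _ => by positivity

lemma bddBelow_range_B (y : ℝ) :
    BddBelow (Set.range fun k : ℤ => (1/2 : ℝ) * (y - 1/2 + (k : ℝ))^2) :=
  ⟨0, by rintro _ ⟨k, rfl⟩; positivity⟩

lemma B_le_of_odd (y : ℝ) {n : ℤ} (hn : Odd n) : B y ≤ (2 * y - n) ^ 2 / 8 := by
  obtain ⟨c, rfl⟩ := hn
  refine (ciInf_le (bddBelow_range_B y) (-c)).trans_eq ?_
  push_cast
  ring

lemma exists_odd_B_eq (y : ℝ) : ∃ n : ℤ, Odd n ∧ B y = (2 * y - n) ^ 2 / 8 := by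
  set r := round (y - 1/2)
  refine ⟨2 * r + 1, odd_two_mul_add_one r, le_antisymm (B_le_of_odd y (odd_two_mul_add_one r)) ?_⟩
  refine le_ciInf fun k => ?_
  have hround : (y - 1/2 - r) ^ 2 ≤ (y - 1/2 + k) ^ 2 :=
    sq_le_sq.mpr (by simpa only [Int.cast_neg, sub_neg_eq_add] using round_le (y - 1/2) (-k))
  push_cast
  nlinarith [hround]

section Lagrange

variable {ι : Type*} [Fintype ι]

def gramDet (u v : ι → ℝ) : ℝ :=
  (∑ j, u j ^ 2) * (∑ j, v j ^ 2) - (∑ j, u j * v j) ^ 2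

lemma gramDet_nonneg (u v : ι → ℝ) : 0 ≤ gramDet u v :=
  sub_nonneg.mpr (Finset.sum_mul_sq_le_sq_mul_sq _ u v)

lemma sum_sq_two_mul_sub_mul_sum_sq (u v : ι → ℝ) (x : ℝ) :
    (∑ j, (2 * v j * x - u j) ^ 2) * ∑ j, v j ^ 2 =
      (2 * x * ∑ j, v j ^ 2 - ∑ j, u j * v j) ^ 2 + gramDet u v := by
  have hexpand : ∑ j, (2 * v j * x - u j) ^ 2 =
      4 * x ^ 2 * ∑ j, v j ^ 2 - 4 * x * ∑ j, u j * v j + ∑ j, u j ^ 2 := by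
    rw [Finset.mul_sum, Finset.mul_sum, ← Finset.sum_sub_distrib, ← Finset.sum_add_distrib]
    exact Finset.sum_congr rfl fun j _ => by ring
  rw [hexpand, gramDet]
  ring

variable {u v : ι → ℝ}

lemma gramDet_div_le_sum_sq (hv : 0 < ∑ j, v j ^ 2) (x : ℝ) :
    gramDet u v / ∑ j, v j ^ 2 ≤ ∑ j, (2 * v j * x - u j) ^ 2 := by
  rw [div_le_iff₀ hv, sum_sq_two_mul_sub_mul_sum_sq]
  exact le_add_of_nonneg_left (sq_nonneg _)

lemma sum_sq_two_mul_sub_eq_gramDet_div (hv : 0 < ∑ j, v j ^ 2) :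
    ∑ j, (2 * v j * ((∑ j, u j * v j) / (2 * ∑ j, v j ^ 2)) - u j) ^ 2 =
      gramDet u v / ∑ j, v j ^ 2 := by
  rw [eq_div_iff hv.ne', sum_sq_two_mul_sub_mul_sum_sq]
  field_simp
  ring

end Lagrange

lemma cast_Svec {N : ℕ} (a n : Fin N → ℤ) :
    (Svec a n : ℝ) = gramDet (fun j => (n j : ℝ)) (fun j => (a j : ℝ)) := by
  simp [Svec, gramDet]

section SumB

variable {ι : Type*} [Fintype ι] (a : ι → ℝ) (x : ℝ)

lemma eight_mul_sum_B_le {n : ι → ℤ} (hn : ∀ j, Odd (n j)) :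
    8 * ∑ j, B (a j * x) ≤ ∑ j, (2 * a j * x - n j) ^ 2 := by
  rw [Finset.mul_sum]
  gcongr with j
  have := B_le_of_odd (a j * x) (hn j)
  rw [← mul_assoc] at this
  linarith

lemma exists_odd_eight_mul_sum_B_eq :
    ∃ n : ι → ℤ, (∀ j, Odd (n j)) ∧ 8 * ∑ j, B (a j * x) = ∑ j, (2 * a j * x - n j) ^ 2 := by
  choose n hn hB using fun j => exists_odd_B_eq (a j * x)
  refine ⟨n, hn, ?_⟩
  rw [Finset.mul_sum]
  exact Finset.sum_congr rfl fun j _ => by rw [hB j, ← mul_assoc]; ring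

end SumB

/-- `24·min_x ∑_j B(aⱼx) = 3·min_{n odd} S_a(n)/‖a‖²`. -/
theorem twentyfour_min_order_eq (N : ℕ) (a : Fin N → ℤ) (ha : a ≠ 0) :
    24 * (⨅ x : ℝ, ∑ j, B ((a j : ℝ) * x)) =
      3 * (⨅ n : {n : Fin N → ℤ // ∀ j, Odd (n j)},
            ((Svec a n.1 : ℤ) : ℝ) / (∑ j, ((a j : ℝ))^2)) := by
  have hA : 0 < ∑ j, ((a j : ℝ)) ^ 2 := by
    obtain ⟨j, hj⟩ := Function.ne_iff.mp ha
    have hj' : (a j : ℝ) ≠ 0 := Int.cast_ne_zero.mpr hj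
    exact Finset.sum_pos' (fun j _ => sq_nonneg _) ⟨j, Finset.mem_univ _, by positivity⟩
  have : Nonempty {n : Fin N → ℤ // ∀ j, Odd (n j)} := ⟨⟨fun _ => 1, fun _ => odd_one⟩⟩
  suffices h : ⨅ x : ℝ, 8 * ∑ j, B ((a j : ℝ) * x) =
      ⨅ n : {n : Fin N → ℤ // ∀ j, Odd (n j)}, ((Svec a n.1 : ℤ) : ℝ) / (∑ j, ((a j : ℝ)) ^ 2) by
    rw [← Real.mul_iInf_of_nonneg (by norm_num)] at h
    linarith
  refine le_antisymm (ciInf_mono_of_forall_exists ?_ fun n => ?_)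
    (ciInf_mono_of_forall_exists ?_ fun x => ?_)
  · refine ⟨0, ?_⟩
    rintro _ ⟨x, rfl⟩
    exact mul_nonneg (by norm_num) (Finset.sum_nonneg fun j _ => B_nonneg _)
  · refine ⟨_, (eight_mul_sum_B_le _
      ((∑ j, (n.1 j : ℝ) * a j) / (2 * ∑ j, (a j : ℝ) ^ 2)) n.2).trans_eq ?_⟩
    rw [cast_Svec]
    exact sum_sq_two_mul_sub_eq_gramDet_div hA
  · refine ⟨0, ?_⟩
    rintro _ ⟨n, rfl⟩
    exact div_nonneg (cast_Svec a n.1 ▸ gramDet_nonneg _ _) hA.le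
  · obtain ⟨n, hn, hB⟩ := exists_odd_eight_mul_sum_B_eq (fun j => (a j : ℝ)) x
    refine ⟨⟨n, hn⟩, ?_⟩
    rw [hB, cast_Svec]
    exact gramDet_div_le_sum_sq hA x
end

section
/- Let a ∈ ℝ^N be nonzero and let u₁,…,u_r be pairwise orthogonal nonzero vectors in ℤ^N, each orthogonal to a, with ‖uⱼ‖² odd for each j. Then for every n ∈ ℤ^N with all coordinates odd, S_a(n) ≥ (∑_{j=1}^r 1/‖uⱼ‖²)·‖a‖², where S_a(n) = ‖n‖²‖a‖² − (n·a)². -/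
/-!
The vectors `a, u₁, …, u_r` form an orthogonal family, so Bessel's inequality for `n` gives
`(n·a)²/‖a‖² + ∑ⱼ (n·uⱼ)²/‖uⱼ‖² ≤ ‖n‖²`, i.e. `S_a(n) ≥ (∑ⱼ (n·uⱼ)²/‖uⱼ‖²)·‖a‖²`.
Modulo 2, `n·uⱼ ≡ ∑ₖ uⱼₖ ≡ ‖uⱼ‖² ≡ 1`, so each `n·uⱼ` is a nonzero integer and `(n·uⱼ)² ≥ 1`.
-/

open Finset RealInnerProductSpace

section Bessel

variable {E ι : Type*} [NormedAddCommGroup E] [InnerProductSpace ℝ E]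

-- Terms with `v i = 0` contribute `0`, since `x / 0 = 0`.
theorem sum_inner_sq_div_norm_sq_le {v : ι → E} (hv : Pairwise fun i j => ⟪v i, v j⟫ = 0)
    (s : Finset ι) (x : E) : ∑ i ∈ s, ⟪v i, x⟫ ^ 2 / ‖v i‖ ^ 2 ≤ ‖x‖ ^ 2 := by
  set c : ι → ℝ := fun i => ⟪v i, x⟫ / ‖v i‖ ^ 2
  -- the orthogonal projection of `x` onto the span of the `v i`
  set p : E := ∑ i ∈ s, c i • v i
  have hxp : ⟪x, p⟫ = ∑ i ∈ s, ⟪v i, x⟫ ^ 2 / ‖v i‖ ^ 2 := by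
    rw [inner_sum]
    refine sum_congr rfl fun i _ => ?_
    rw [real_inner_smul_right, real_inner_comm]
    ring
  have hpv : ∀ j ∈ s, ⟪p, v j⟫ = c j * ‖v j‖ ^ 2 := fun j hj => by
    rw [sum_inner, sum_eq_single_of_mem j hj fun i _ hij => by
      rw [real_inner_smul_left, hv hij, mul_zero], real_inner_smul_left, real_inner_self_eq_norm_sq]
  have hpp : ⟪p, p⟫ = ∑ i ∈ s, ⟪v i, x⟫ ^ 2 / ‖v i‖ ^ 2 := by
    conv_lhs => rw [show p = ∑ i ∈ s, c i • v i from rfl]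
    rw [inner_sum]
    refine sum_congr rfl fun j hj => ?_
    rw [real_inner_smul_right, hpv j hj]
    rcases eq_or_ne ‖v j‖ 0 with h | h
    · simp [c, h]
    · simp only [c]
      field_simp
  have hdist := real_inner_self_nonneg (x := x - p)
  rw [inner_sub_left, inner_sub_right, inner_sub_right, ← real_inner_comm p x, hxp, hpp,
    real_inner_self_eq_norm_sq] at hdist
  linarith

theorem sum_inner_sq_div_norm_sq_mul_le {v : ι → E} (hv : Pairwise fun i j => ⟪v i, v j⟫ = 0)
    {a : E} (ha : ∀ i, ⟪v i, a⟫ = 0) (s : Finset ι) (x : E) :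
    (∑ i ∈ s, ⟪v i, x⟫ ^ 2 / ‖v i‖ ^ 2) * ‖a‖ ^ 2 ≤ ‖x‖ ^ 2 * ‖a‖ ^ 2 - ⟪x, a⟫ ^ 2 := by
  rcases eq_or_ne a 0 with rfl | ha0
  · simp
  have hw : Pairwise fun i j => ⟪Option.elim i a v, Option.elim j a v⟫ = 0 := by
    rintro (_ | i) (_ | j) hij
    · exact absurd rfl hij
    · simpa [real_inner_comm] using ha j
    · simpa using ha i
    · simpa using hv (Option.some_injective _ |>.ne_iff.mp hij)
  have hbessel := sum_inner_sq_div_norm_sq_le hw (insertNone s) x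
  have hna : 0 < ‖a‖ ^ 2 := by positivity
  rw [sum_insertNone, Option.elim_none, real_inner_comm x a, div_add' _ _ _ hna.ne',
    div_le_iff₀ hna] at hbessel
  simp only [Option.elim_some] at hbessel
  linarith

end Bessel

theorem Int.odd_sum_mul_of_odd {ι : Type*} {s : Finset ι} {n u : ι → ℤ} (hn : ∀ k ∈ s, Odd (n k))
    (hu : Odd (∑ k ∈ s, u k ^ 2)) : Odd (∑ k ∈ s, u k * n k) := by
  have heven : Even (∑ k ∈ s, u k * (n k - u k)) := by
    refine even_sum _ fun k hk => ?_
    rcases Int.even_or_odd (u k) with h | h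
    · exact h.mul_right _
    · exact ((hn k hk).sub_odd h).mul_left _
  simpa [mul_sub, ← sq] using hu.add_even heven

theorem Int.one_le_sq_of_odd {z : ℤ} (hz : Odd z) : 1 ≤ z ^ 2 :=
  (one_le_sq_iff_one_le_abs z).mpr (Int.one_le_abs (by rintro rfl; simp at hz))

theorem S_ge_sum_inv_norms_general (N r : ℕ) (a : Fin N → ℝ)
    (u : Fin r → (Fin N → ℤ))
    (hperp : ∀ i j, i ≠ j → ∑ k, (u i k : ℝ) * (u j k : ℝ) = 0)
    (horth : ∀ j, ∑ k, (u j k : ℝ) * a k = 0)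
    (hodd : ∀ j, Odd (∑ k, (u j k)^2))
    (n : Fin N → ℤ) (hn : ∀ k, Odd (n k)) :
    (∑ k, ((n k : ℝ))^2) * (∑ k, (a k)^2) - (∑ k, (n k : ℝ) * a k)^2
      ≥ (∑ j, 1 / (∑ k, ((u j k : ℝ))^2)) * (∑ k, (a k)^2) := by
  let e : (Fin N → ℝ) → EuclideanSpace ℝ (Fin N) := WithLp.toLp 2
  have inner_e (f g : Fin N → ℝ) : ⟪e f, e g⟫ = ∑ k, f k * g k := by
    simp [e, EuclideanSpace.inner_toLp_toLp, dotProduct, mul_comm]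
  have norm_e (f : Fin N → ℝ) : ‖e f‖ ^ 2 = ∑ k, f k ^ 2 := by
    simp [e, EuclideanSpace.real_norm_sq_eq]
  have bessel := sum_inner_sq_div_norm_sq_mul_le (v := fun j => e (Int.cast ∘ u j))
    (fun i j hij => by simpa [inner_e] using hperp i j hij) (a := e a)
    (fun j => by simpa [inner_e] using horth j) univ (e (Int.cast ∘ n))
  simp only [inner_e, norm_e, Function.comp_apply] at bessel
  refine le_trans ?_ bessel
  gcongr with j
  exact_mod_cast Int.one_le_sq_of_odd (Int.odd_sum_mul_of_odd (fun k _ => hn k) (hodd j))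

/-- If `u₁,…,u_r` are pairwise orthogonal nonzero integer vectors, each orthogonal
to a nonzero `a ∈ ℝ^N`, with odd square lengths, then for every `n ∈ ℤ^N` with all
odd coordinates, `S_a(n) ≥ (∑_j 1/‖uⱼ‖²)·‖a‖²`. -/
theorem S_ge_sum_inv_norms (N r : ℕ) (a : Fin N → ℝ) (ha : a ≠ 0)
    (u : Fin r → (Fin N → ℤ))
    (hu0 : ∀ j, u j ≠ 0)
    (hperp : ∀ i j, i ≠ j → ∑ k, (u i k : ℝ) * (u j k : ℝ) = 0)
    (horth : ∀ j, ∑ k, (u j k : ℝ) * a k = 0)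
    (hodd : ∀ j, Odd (∑ k, (u j k)^2))
    (n : Fin N → ℤ) (hn : ∀ k, Odd (n k)) :
    (∑ k, ((n k : ℝ))^2) * (∑ k, (a k)^2) - (∑ k, (n k : ℝ) * a k)^2
      ≥ (∑ j, 1 / (∑ k, ((u j k : ℝ))^2)) * (∑ k, (a k)^2) :=
  S_ge_sum_inv_norms_general N r a u hperp horth hodd n hn
end

section
/- For a = (a, b, a+b) with a, b positive integers and any n ∈ ℤ³ with all coordinates odd, one has S_a(n) ≥ (1/3)(a² + b² + (a+b)²), where S_a(n) = ‖n‖²‖a‖² − (n·a)². -/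
/-!
The vector `u = (1, 1, -1)` is orthogonal to `a = (a, b, a + b)` and `‖u‖² = 3`. Since `u ⟂ a`,
the Gram determinant of `n, a, u` gives `‖a‖² (n·u)² ≤ ‖u‖² S_a(n)`: the part of `n` orthogonal
to `a` is at least as long as its component along `u`. For `n` with odd coordinates `n·u` is odd,
hence `(n·u)² ≥ 1`, and so `‖a‖² ≤ 3 S_a(n)`.
-/

open Matrix

theorem gram_identity_of_dotProduct_eq_zero {R : Type*} [CommRing R] (n a u : Fin 3 → R)
    (hau : a ⬝ᵥ u = 0) :
    (u ⬝ᵥ u) * ((n ⬝ᵥ n) * (a ⬝ᵥ a) - (n ⬝ᵥ a) ^ 2)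
      = (a ⬝ᵥ a) * (n ⬝ᵥ u) ^ 2 + (det (of ![n, a, u])) ^ 2 := by
  rw [det_fin_three]
  simp only [dotProduct, Fin.sum_univ_three] at hau ⊢
  simp only [Fin.isValue, of_apply, cons_val_zero, cons_val_one, cons_val_two, head_cons,
    tail_cons]
  linear_combination ((a 0 * u 0 + a 1 * u 1 + a 2 * u 2) * (n 0 * n 0 + n 1 * n 1 + n 2 * n 2)
    - 2 * (n 0 * a 0 + n 1 * a 1 + n 2 * a 2) * (n 0 * u 0 + n 1 * u 1 + n 2 * u 2)) * hau

theorem dotProduct_sq_mul_le_of_dotProduct_eq_zero {R : Type*} [CommRing R] [LinearOrder R]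
    [IsStrictOrderedRing R] (n a u : Fin 3 → R) (hau : a ⬝ᵥ u = 0) :
    (a ⬝ᵥ a) * (n ⬝ᵥ u) ^ 2 ≤ (u ⬝ᵥ u) * ((n ⬝ᵥ n) * (a ⬝ᵥ a) - (n ⬝ᵥ a) ^ 2) := by
  rw [gram_identity_of_dotProduct_eq_zero n a u hau]
  exact le_add_of_nonneg_right (sq_nonneg _)

theorem Int.one_le_sq_of_odd_s7 {x : ℤ} (hx : Odd x) : 1 ≤ x ^ 2 :=
  (one_le_sq_iff_one_le_abs x).mpr (Int.one_le_abs (by rintro rfl; simp at hx))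

theorem S_quark_ge_general (a b : ℤ)
    (n₁ n₂ n₃ : ℤ) (h₁ : Odd n₁) (h₂ : Odd n₂) (h₃ : Odd n₃) :
    (((n₁^2 + n₂^2 + n₃^2) * (a^2 + b^2 + (a+b)^2)
        - (n₁*a + n₂*b + n₃*(a+b))^2 : ℤ) : ℝ)
      ≥ (1/3) * ((a : ℝ)^2 + (b : ℝ)^2 + ((a : ℝ) + (b : ℝ))^2) := by
  have hodd : Odd (n₁ + n₂ - n₃) := (h₁.add_odd h₂).sub_odd h₃
  have hgram := dotProduct_sq_mul_le_of_dotProduct_eq_zero ![n₁, n₂, n₃] ![a, b, a + b]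
    ![1, 1, -1] (by simp [dotProduct, Fin.sum_univ_three])
  simp only [dotProduct, Fin.sum_univ_three, Fin.isValue, cons_val_zero, cons_val_one,
    cons_val_two, head_cons, tail_cons] at hgram
  have hnorm : 0 ≤ a ^ 2 + b ^ 2 + (a + b) ^ 2 := by positivity
  have hInt : a ^ 2 + b ^ 2 + (a + b) ^ 2 ≤ 3 * ((n₁^2 + n₂^2 + n₃^2) * (a^2 + b^2 + (a+b)^2)
      - (n₁*a + n₂*b + n₃*(a+b))^2) := by
    linarith [mul_le_mul_of_nonneg_left (Int.one_le_sq_of_odd_s7 hodd) hnorm]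
  have hReal : ((a ^ 2 + b ^ 2 + (a + b) ^ 2 : ℤ) : ℝ) ≤ 3 * (((n₁^2 + n₂^2 + n₃^2)
      * (a^2 + b^2 + (a+b)^2) - (n₁*a + n₂*b + n₃*(a+b))^2 : ℤ) : ℝ) := by
    exact_mod_cast hInt
  push_cast at hReal ⊢
  linarith

/-- For `a = (a, b, a+b)` with `a, b` positive and `n` with all odd coordinates,
`S_a(n) ≥ (1/3)(a² + b² + (a+b)²)`. -/
theorem S_quark_ge (a b : ℤ) (ha : 0 < a) (hb : 0 < b)
    (n₁ n₂ n₃ : ℤ) (h₁ : Odd n₁) (h₂ : Odd n₂) (h₃ : Odd n₃) :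
    (((n₁^2 + n₂^2 + n₃^2) * (a^2 + b^2 + (a+b)^2)
        - (n₁*a + n₂*b + n₃*(a+b))^2 : ℤ) : ℝ)
      ≥ (1/3) * ((a : ℝ)^2 + (b : ℝ)^2 + ((a : ℝ) + (b : ℝ))^2) :=
  S_quark_ge_general a b n₁ n₂ n₃ h₁ h₂ h₃
end

section
/- For a = (a, a+b, a+2b, b) with a, b positive integers and any n ∈ ℤ⁴ with all coordinates odd, one has S_a(n) ≥ (2/3)‖a‖², where S_a(n) = ‖n‖²‖a‖² − (n·a)². -/
/-!
Write `v = (a, a+b, a+2b, b)`. The vectors `u₁ = (0,1,-1,1)`, `u₂ = (1,-1,0,1)` and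
`w = (a+2b, b, -a, -(a+b))` are pairwise orthogonal and orthogonal to `v`, with `‖u₁‖² = ‖u₂‖² = 3`
and `‖w‖² = ‖v‖²`. Expanding `n` in this orthogonal basis gives
`3 S_v(n) = ((n·u₁)² + (n·u₂)²) ‖v‖² + 3 (n·w)²`.
When all `nᵢ` are odd, `n·u₁` and `n·u₂` are sums of three odd numbers, hence odd and of square
at least `1`, so `3 S_v(n) ≥ 2 ‖v‖²`.
-/

theorem three_mul_lagrange_gap_eq {R : Type*} [CommRing R] (a b n₁ n₂ n₃ n₄ : R) :
    3 * ((n₁^2 + n₂^2 + n₃^2 + n₄^2) * (a^2 + (a+b)^2 + (a+2*b)^2 + b^2)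
        - (n₁*a + n₂*(a+b) + n₃*(a+2*b) + n₄*b)^2)
      = ((n₂ - n₃ + n₄)^2 + (n₁ - n₂ + n₄)^2) * (a^2 + (a+b)^2 + (a+2*b)^2 + b^2)
        + 3 * (n₁*(a+2*b) + n₂*b - n₃*a - n₄*(a+b))^2 := by
  ring

theorem Int.one_le_sq_of_odd_s8 {n : ℤ} (h : Odd n) : 1 ≤ n^2 :=
  (one_le_sq_iff_one_le_abs n).2 (Int.one_le_abs (by rintro rfl; exact Int.not_odd_zero h))

theorem Odd.sub_add_odd {R : Type*} [Ring R] {x y z : R} (hx : Odd x) (hy : Odd y) (hz : Odd z) :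
    Odd (x - y + z) :=
  (hx.sub_odd hy).add_odd hz

theorem two_mul_normSq_le_three_mul_lagrange_gap (a b : ℤ) {n₁ n₂ n₃ n₄ : ℤ}
    (h₁ : Odd n₁) (h₂ : Odd n₂) (h₃ : Odd n₃) (h₄ : Odd n₄) :
    2 * (a^2 + (a+b)^2 + (a+2*b)^2 + b^2)
      ≤ 3 * ((n₁^2 + n₂^2 + n₃^2 + n₄^2) * (a^2 + (a+b)^2 + (a+2*b)^2 + b^2)
        - (n₁*a + n₂*(a+b) + n₃*(a+2*b) + n₄*b)^2) := by
  have hu₁ := Int.one_le_sq_of_odd_s8 (h₂.sub_add_odd h₃ h₄)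
  have hu₂ := Int.one_le_sq_of_odd_s8 (h₁.sub_add_odd h₂ h₄)
  have hv : 0 ≤ a^2 + (a+b)^2 + (a+2*b)^2 + b^2 := by positivity
  rw [three_mul_lagrange_gap_eq]
  nlinarith [sq_nonneg (n₁*(a+2*b) + n₂*b - n₃*a - n₄*(a+b))]

theorem S_B2_ge_general (a b : ℤ)
    (n₁ n₂ n₃ n₄ : ℤ) (h₁ : Odd n₁) (h₂ : Odd n₂) (h₃ : Odd n₃) (h₄ : Odd n₄) :
    (((n₁^2 + n₂^2 + n₃^2 + n₄^2) * (a^2 + (a+b)^2 + (a+2*b)^2 + b^2)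
        - (n₁*a + n₂*(a+b) + n₃*(a+2*b) + n₄*b)^2 : ℤ) : ℝ)
      ≥ (2/3) * ((a : ℝ)^2 + ((a : ℝ)+(b : ℝ))^2 + ((a : ℝ)+2*(b : ℝ))^2 + (b : ℝ)^2) := by
  have h : (2 * (a^2 + (a+b)^2 + (a+2*b)^2 + b^2) : ℝ)
      ≤ 3 * ((n₁^2 + n₂^2 + n₃^2 + n₄^2) * (a^2 + (a+b)^2 + (a+2*b)^2 + b^2)
        - (n₁*a + n₂*(a+b) + n₃*(a+2*b) + n₄*b)^2) := by
    exact_mod_cast two_mul_normSq_le_three_mul_lagrange_gap a b h₁ h₂ h₃ h₄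
  push_cast
  linarith

/-- For `a = (a, a+b, a+2b, b)` with `a, b` positive and `n` with all odd
coordinates, `S_a(n) ≥ (2/3)‖a‖²`. -/
theorem S_B2_ge (a b : ℤ) (ha : 0 < a) (hb : 0 < b)
    (n₁ n₂ n₃ n₄ : ℤ) (h₁ : Odd n₁) (h₂ : Odd n₂) (h₃ : Odd n₃) (h₄ : Odd n₄) :
    (((n₁^2 + n₂^2 + n₃^2 + n₄^2) * (a^2 + (a+b)^2 + (a+2*b)^2 + b^2)
        - (n₁*a + n₂*(a+b) + n₃*(a+2*b) + n₄*b)^2 : ℤ) : ℝ)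
      ≥ (2/3) * ((a : ℝ)^2 + ((a : ℝ)+(b : ℝ))^2 + ((a : ℝ)+2*(b : ℝ))^2 + (b : ℝ)^2) :=
  S_B2_ge_general a b n₁ n₂ n₃ n₄ h₁ h₂ h₃ h₄
end

section
/- Let R be an irreducible root system with positive system R⁺, highest root α, Weyl vector w = (1/2)∑_{r∈R⁺} r, and h = (1/n)∑_{r∈R⁺}(r,r). Then h = (1/2)((α+w, α+w) − (w,w)), equivalently 2h = (α,α) + 2(w,α). -/
/-!
The frame operator `T x = ∑_{r ∈ R} ⟪r, x⟫ r` of the root system is symmetric and commutes with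
every root reflection, so an eigenspace of `T` is a nonzero reflection-invariant subspace and
irreducibility forces `T = μ • 1`. Taking traces gives `n μ = ∑_{r ∈ R} ⟪r, r⟫ = 2 n h`, i.e.
`μ = 2h`. On the other hand `⟪T α, α⟫ = 2 ∑_{r ∈ R⁺} ⟪α, r⟫²`, and every positive root `r ≠ α`
has `⟪α, r⟫ ∈ {0, ⟪α, α⟫ / 2}`, so this equals `⟪α, α⟫ (⟪α, α⟫ + 2⟪w, α⟫)`; comparing with
`2h ⟪α, α⟫` gives `2h = ⟪α, α⟫ + 2⟪w, α⟫`.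
-/

open scoped RealInnerProductSpace

lemma Finset.sum_eq_two_mul_sum_of_even {G : Type*} [InvolutiveNeg G] [DecidableEq G]
    {s t : Finset G} (hneg : ∀ x ∈ s, -x ∈ s) (hts : t ⊆ s) (hpart : ∀ x ∈ s, (x ∈ t ↔ -x ∉ t))
    {f : G → ℝ} (hf : ∀ x, f (-x) = f x) :
    ∑ x ∈ s, f x = 2 * ∑ x ∈ t, f x := by
  rw [← Finset.sum_sdiff hts, two_mul]
  congr 1
  refine Finset.sum_nbij' Neg.neg Neg.neg ?_ ?_ (fun x _ => neg_neg x) (fun x _ => neg_neg x)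
    fun x _ => (hf x).symm
  · intro x hx
    obtain ⟨hxs, hxt⟩ := Finset.mem_sdiff.mp hx
    exact not_not.mp fun h => hxt ((hpart x hxs).mpr h)
  · intro x hx
    exact Finset.mem_sdiff.mpr ⟨hneg x (hts hx), (hpart x (hts hx)).mp hx⟩

lemma Finset.two_mul_sum_sq_eq_of_forall_ne {ι : Type*} [DecidableEq ι] {s : Finset ι} {a : ι}
    (ha : a ∈ s) {f : ι → ℝ} (hf : ∀ i ∈ s, i ≠ a → f i = 0 ∨ 2 * f i = f a) :
    2 * ∑ i ∈ s, f i ^ 2 = f a * (f a + ∑ i ∈ s, f i) := by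
  have herase : ∀ i ∈ s.erase a, 2 * f i ^ 2 = f a * f i := by
    intro i hi
    rcases hf i (Finset.mem_of_mem_erase hi) (Finset.ne_of_mem_erase hi) with h | h
    · simp [h]
    · rw [← h]; ring
  rw [← Finset.add_sum_erase s (fun i => f i ^ 2) ha, ← Finset.add_sum_erase s f ha, mul_add,
    Finset.mul_sum, Finset.sum_congr rfl herase, ← Finset.mul_sum]
  ring

theorem LinearMap.IsSymmetric.exists_eq_smul_one_of_commute {E : Type*}
    [NormedAddCommGroup E] [InnerProductSpace ℝ E] [FiniteDimensional ℝ E]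
    {T : E →ₗ[ℝ] E} (hT : T.IsSymmetric) {ι : Type*} (S : ι → E →ₗ[ℝ] E)
    (hcomm : ∀ i, Commute T (S i))
    (hirr : ∀ p : Submodule ℝ E, (∀ i, ∀ x ∈ p, S i x ∈ p) → p = ⊥ ∨ p = ⊤) :
    ∃ μ : ℝ, T = μ • 1 := by
  rcases subsingleton_or_nontrivial E with _ | _
  · exact ⟨0, Subsingleton.elim _ _⟩
  obtain ⟨μ, hμ⟩ : ∃ μ, Module.End.HasEigenvalue T μ :=
    ⟨_, hT.hasEigenvalue_iSup_of_finiteDimensional⟩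
  have hinv : ∀ i, ∀ x ∈ Module.End.eigenspace T μ, S i x ∈ Module.End.eigenspace T μ :=
    fun i _ hx => Module.End.mapsTo_genEigenspace_of_comm (hcomm i) μ 1 hx
  have htop : Module.End.eigenspace T μ = ⊤ := (hirr _ hinv).resolve_left hμ
  exact ⟨μ, LinearMap.ext fun x =>
    Module.End.mem_eigenspace_iff.mp (htop ▸ Submodule.mem_top)⟩

section

variable {E : Type*} [NormedAddCommGroup E] [InnerProductSpace ℝ E]

/-- The reflection in `rᗮ`, written by its explicit formula rather than as
`reflection (ℝ ∙ r)ᗮ` so that it unfolds to the expressions in the root-system axioms. -/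
noncomputable def reflectionAlong (r : E) : E →ₗ[ℝ] E where
  toFun x := x - (2 * ⟪x, r⟫ / ⟪r, r⟫) • r
  map_add' x y := by
    simp only [inner_add_left, mul_add, add_div, add_smul]
    abel
  map_smul' c x := by
    simp only [real_inner_smul_left, RingHom.id_apply, smul_sub, smul_smul]
    congr 2
    ring

lemma reflectionAlong_apply (r x : E) :
    reflectionAlong r x = x - (2 * ⟪x, r⟫ / ⟪r, r⟫) • r := rfl

lemma reflectionAlong_isSymmetric (r : E) : (reflectionAlong r).IsSymmetric := by
  intro x y
  simp only [reflectionAlong_apply, inner_sub_left, inner_sub_right, real_inner_smul_left,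
    real_inner_smul_right, real_inner_comm r y]
  ring

lemma inner_reflectionAlong_self {r : E} (hr : r ≠ 0) (x : E) :
    ⟪reflectionAlong r x, r⟫ = -⟪x, r⟫ := by
  have : ⟪r, r⟫ ≠ 0 := inner_self_ne_zero.mpr hr
  rw [reflectionAlong_apply, inner_sub_left, real_inner_smul_left, div_mul_cancel₀ _ this]
  ring

lemma reflectionAlong_reflectionAlong {r : E} (hr : r ≠ 0) (x : E) :
    reflectionAlong r (reflectionAlong r x) = x := by
  rw [reflectionAlong_apply _ (reflectionAlong r x), inner_reflectionAlong_self hr,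
    reflectionAlong_apply]
  module

lemma reflectionAlong_eq_add {a b : E} (hb : b ≠ 0) (hab : 2 * ⟪a, b⟫ = -⟪b, b⟫) :
    reflectionAlong b a = a + b := by
  rw [reflectionAlong_apply, hab, neg_div_self (inner_self_ne_zero.mpr hb), neg_one_smul,
    sub_neg_eq_add]

noncomputable def frameOperator (R : Finset E) : E →ₗ[ℝ] E :=
  ∑ r ∈ R, (innerₛₗ ℝ r).smulRight r

lemma frameOperator_apply (R : Finset E) (x : E) :
    frameOperator R x = ∑ r ∈ R, ⟪r, x⟫ • r := by
  simp [frameOperator]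

lemma inner_frameOperator_left (R : Finset E) (x y : E) :
    ⟪frameOperator R x, y⟫ = ∑ r ∈ R, ⟪r, x⟫ * ⟪r, y⟫ := by
  simp only [frameOperator_apply, sum_inner, real_inner_smul_left]

lemma frameOperator_isSymmetric (R : Finset E) : (frameOperator R).IsSymmetric := by
  intro x y
  rw [inner_frameOperator_left, real_inner_comm, inner_frameOperator_left]
  exact Finset.sum_congr rfl fun r _ => mul_comm _ _

lemma trace_frameOperator [FiniteDimensional ℝ E] (R : Finset E) :
    LinearMap.trace ℝ E (frameOperator R) = ∑ r ∈ R, ⟪r, r⟫ := by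
  simp [frameOperator, map_sum]

lemma frameOperator_commute {R : Finset E} {σ : E →ₗ[ℝ] E} (hσ : σ.IsSymmetric)
    (hinv : ∀ x, σ (σ x) = x) (hR : Set.MapsTo σ R R) :
    Commute (frameOperator R) σ := by
  refine LinearMap.ext fun x => ?_
  simp only [Module.End.mul_apply, frameOperator_apply, map_sum, map_smul]
  calc ∑ r ∈ R, ⟪r, σ x⟫ • r = ∑ r ∈ R, ⟪σ r, x⟫ • σ (σ r) :=
        Finset.sum_congr rfl fun r _ => by rw [hinv, hσ]
    _ = ∑ r ∈ R, ⟪r, x⟫ • σ r :=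
        Finset.sum_nbij' σ σ hR hR (fun r _ => hinv r) (fun r _ => hinv r) fun _ _ => rfl

variable {R Rplus : Finset E}

lemma exists_frameOperator_eq_smul_one [FiniteDimensional ℝ E] (h0 : (0 : E) ∉ R)
    (hrefl : ∀ r ∈ R, ∀ s ∈ R, reflectionAlong r s ∈ R)
    (hirr : ∀ p : Submodule ℝ E,
      (∀ r ∈ R, ∀ x ∈ p, reflectionAlong r x ∈ p) → p = ⊥ ∨ p = ⊤) :
    ∃ μ : ℝ, frameOperator R = μ • 1 :=
  (frameOperator_isSymmetric R).exists_eq_smul_one_of_commute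
    (fun r : R => reflectionAlong (r : E))
    (fun r => frameOperator_commute (reflectionAlong_isSymmetric _)
      (reflectionAlong_reflectionAlong (ne_of_mem_of_not_mem r.2 h0)) (hrefl r r.2))
    (fun p hp => hirr p fun r hr => hp ⟨r, hr⟩)

lemma add_mem_of_inner_neg (h0 : (0 : E) ∉ R)
    (hrefl : ∀ r ∈ R, ∀ s ∈ R, reflectionAlong r s ∈ R)
    (hcrys : ∀ r ∈ R, ∀ s ∈ R, ∃ k : ℤ, 2 * ⟪s, r⟫ = (k : ℝ) * ⟪r, r⟫)
    {a b : E} (ha : a ∈ R) (hb : b ∈ R) (hab : ⟪a, b⟫ < 0) (hne : a + b ≠ 0) :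
    a + b ∈ R := by
  have ha0 : a ≠ 0 := ne_of_mem_of_not_mem ha h0
  have hb0 : b ≠ 0 := ne_of_mem_of_not_mem hb h0
  have haa : 0 < ⟪a, a⟫ := real_inner_self_pos.mpr ha0
  have hbb : 0 < ⟪b, b⟫ := real_inner_self_pos.mpr hb0
  obtain ⟨k, hk⟩ := hcrys b hb a ha
  obtain ⟨l, hl⟩ := hcrys a ha b hb
  rw [real_inner_comm] at hl
  have hk0 : k < 0 := by exact_mod_cast (show (k : ℝ) < 0 by nlinarith)
  have hl0 : l < 0 := by exact_mod_cast (show (l : ℝ) < 0 by nlinarith)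
  rcases (show k = -1 ∨ k ≤ -2 by omega) with rfl | hk2
  · rw [← reflectionAlong_eq_add hb0 (by simpa using hk)]
    exact hrefl b hb a ha
  rcases (show l = -1 ∨ l ≤ -2 by omega) with rfl | hl2
  · rw [add_comm, ← reflectionAlong_eq_add ha0 (by rw [real_inner_comm]; simpa using hl)]
    exact hrefl a ha b hb
  -- both Cartan integers are `≤ -2`, which forces `‖a + b‖² ≤ 0`
  have hk2' : (k : ℝ) ≤ -2 := by exact_mod_cast hk2
  have hl2' : (l : ℝ) ≤ -2 := by exact_mod_cast hl2
  refine absurd (real_inner_self_nonpos.mp ?_) hne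
  rw [real_inner_add_add_self]
  nlinarith

lemma inner_highest_root_nonneg (h0 : (0 : E) ∉ R)
    (hrefl : ∀ r ∈ R, ∀ s ∈ R, reflectionAlong r s ∈ R)
    (hcrys : ∀ r ∈ R, ∀ s ∈ R, ∃ k : ℤ, 2 * ⟪s, r⟫ = (k : ℝ) * ⟪r, r⟫)
    (hsub : Rplus ⊆ R) (hpart : ∀ r ∈ R, (r ∈ Rplus ↔ -r ∉ Rplus))
    {α : E} (hα : α ∈ Rplus) (hhigh : ∀ r ∈ Rplus, α + r ∉ R)
    {r : E} (hr : r ∈ Rplus) :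
    0 ≤ ⟪α, r⟫ := by
  by_contra! hneg
  have hne : α + r ≠ 0 := by
    intro h
    rw [eq_neg_of_add_eq_zero_right h] at hr
    exact (hpart α (hsub hα)).mp hα hr
  exact hhigh r hr (add_mem_of_inner_neg h0 hrefl hcrys (hsub hα) (hsub hr) hneg hne)

lemma inner_highest_root_eq_zero_or (h0 : (0 : E) ∉ R)
    (hrefl : ∀ r ∈ R, ∀ s ∈ R, reflectionAlong r s ∈ R)
    (hcrys : ∀ r ∈ R, ∀ s ∈ R, ∃ k : ℤ, 2 * ⟪s, r⟫ = (k : ℝ) * ⟪r, r⟫)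
    (hsub : Rplus ⊆ R) (hpart : ∀ r ∈ R, (r ∈ Rplus ↔ -r ∉ Rplus))
    {α : E} (hα : α ∈ Rplus) (hhigh : ∀ r ∈ Rplus, α + r ∉ R)
    (hlong : ∀ r ∈ R, ⟪r, r⟫ ≤ ⟪α, α⟫)
    {r : E} (hr : r ∈ Rplus) (hrα : r ≠ α) :
    ⟪α, r⟫ = 0 ∨ 2 * ⟪α, r⟫ = ⟪α, α⟫ := by
  rcases (inner_highest_root_nonneg h0 hrefl hcrys hsub hpart hα hhigh hr).eq_or_lt
    with hzero | hpos
  · exact .inl hzero.symm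
  right
  obtain ⟨k, hk⟩ := hcrys α (hsub hα) r (hsub hr)
  rw [real_inner_comm α r] at hk
  have hαα : 0 ≤ ⟪α, α⟫ := real_inner_self_nonneg
  have hk0 : 0 < k := by exact_mod_cast (show (0 : ℝ) < k by nlinarith)
  rcases (show k = 1 ∨ 2 ≤ k by omega) with rfl | hk2
  · simpa using hk
  -- `k ≥ 2` would give `‖r - α‖² ≤ ‖r‖² - ‖α‖² ≤ 0`
  have hk2' : (2 : ℝ) ≤ k := by exact_mod_cast hk2
  refine absurd (sub_eq_zero.mp (real_inner_self_nonpos.mp ?_)) hrα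
  rw [real_inner_sub_sub_self, real_inner_comm α r]
  nlinarith [hlong r (hsub hr)]

end

/-- For an irreducible crystallographic root system `R` with positive system
`R⁺`, highest root `α`, Weyl vector `w = (1/2)∑_{r∈R⁺} r` and
`h = (1/n)∑_{r∈R⁺}(r,r)`, one has `h = (1/2)((α+w,α+w) − (w,w))`, equivalently
`2h = (α,α) + 2(w,α)`. -/
theorem h_eq_highest_root_formula
    {E : Type*} [NormedAddCommGroup E] [InnerProductSpace ℝ E]
    [FiniteDimensional ℝ E]
    (n : ℕ) (hn : 0 < n) (hdim : Module.finrank ℝ E = n)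
    (R Rplus : Finset E)
    (h0 : (0 : E) ∉ R)
    (hneg : ∀ r ∈ R, -r ∈ R)
    (hrefl : ∀ r ∈ R, ∀ s ∈ R,
      s - (2 * (inner ℝ s r : ℝ) / (inner ℝ r r : ℝ)) • r ∈ R)
    (hcrys : ∀ r ∈ R, ∀ s ∈ R, ∃ k : ℤ,
      2 * (inner ℝ s r : ℝ) = (k : ℝ) * (inner ℝ r r : ℝ))
    (hsub : Rplus ⊆ R)
    (hpart : ∀ r ∈ R, (r ∈ Rplus ↔ -r ∉ Rplus))
    (hirr : ∀ p : Submodule ℝ E,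
      (∀ r ∈ R, ∀ x ∈ p, x - (2 * (inner ℝ x r : ℝ) / (inner ℝ r r : ℝ)) • r ∈ p) →
      p = ⊥ ∨ p = ⊤)
    (α : E) (hα : α ∈ Rplus)
    (hhigh : ∀ r ∈ Rplus, α + r ∉ R)
    (hlong : ∀ r ∈ R, (inner ℝ r r : ℝ) ≤ (inner ℝ α α : ℝ))
    (h : ℝ) (hh : h = (1 / (n : ℝ)) * ∑ r ∈ Rplus, (inner ℝ r r : ℝ))
    (w : E) (hw : w = (1/2 : ℝ) • ∑ r ∈ Rplus, r) :
    h = (1/2) * ((inner ℝ (α + w) (α + w) : ℝ) - (inner ℝ w w : ℝ)) ∧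
    2 * h = (inner ℝ α α : ℝ) + 2 * (inner ℝ w α : ℝ) := by
  classical
  obtain ⟨μ, hμ⟩ := exists_frameOperator_eq_smul_one h0 hrefl hirr
  have hμh : μ = 2 * h := by
    have htr := trace_frameOperator R
    rw [hμ, map_smul, LinearMap.trace_one, hdim, smul_eq_mul,
      Finset.sum_eq_two_mul_sum_of_even hneg hsub hpart (fun x => inner_neg_neg x x)] at htr
    have hn' : (n : ℝ) ≠ 0 := Nat.cast_ne_zero.mpr hn.ne'
    rw [hh, mul_left_comm, ← htr]
    field_simp
  have hwα : 2 * ⟪w, α⟫ = ∑ r ∈ Rplus, ⟪α, r⟫ := by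
    rw [hw, real_inner_smul_left, sum_inner]
    simp only [real_inner_comm α]
    ring
  have hkey : 2 * h * ⟪α, α⟫ = ⟪α, α⟫ * (⟪α, α⟫ + 2 * ⟪w, α⟫) :=
    calc 2 * h * ⟪α, α⟫ = ⟪frameOperator R α, α⟫ := by
          rw [hμ, ← hμh, LinearMap.smul_apply, Module.End.one_apply, real_inner_smul_left]
      _ = 2 * ∑ r ∈ Rplus, ⟪α, r⟫ ^ 2 := by
          rw [inner_frameOperator_left, Finset.sum_eq_two_mul_sum_of_even hneg hsub hpart
            (fun x => by rw [inner_neg_left, neg_mul_neg])]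
          simp only [real_inner_comm α, sq]
      _ = ⟪α, α⟫ * (⟪α, α⟫ + 2 * ⟪w, α⟫) := by
          rw [Finset.two_mul_sum_sq_eq_of_forall_ne (f := fun r => ⟪α, r⟫) hα fun r hr hrα =>
            inner_highest_root_eq_zero_or h0 hrefl hcrys hsub hpart hα hhigh hlong hr hrα, hwα]
  have hA : ⟪α, α⟫ ≠ 0 := inner_self_ne_zero.mpr (ne_of_mem_of_not_mem (hsub hα) h0)
  have h2h : 2 * h = ⟪α, α⟫ + 2 * ⟪w, α⟫ := mul_right_cancel₀ hA (by linarith)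
  refine ⟨?_, h2h⟩
  rw [real_inner_add_add_self, real_inner_comm w α]
  linarith
end
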